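/- Define P_{3,n} by the 3×3 Wronskian of y, xy, x²y at derivative orders n, n+1, n+2 via (f⁻ⁿy)³ P_{3,n}. Then for all n ≥ 2: P_{3,n} = (n+1)²(n+2)P_n³ − n(n+1)P_n(2(n+2)P_{n−1}P_{n+1} + (n−1)P_{n−2}P_{n+2}) + n((n²+n−2)P_{n−2}P_{n+1}² + n(n+1)P_{n−1}²P_{n+2}). -/
import Mathlib


open Polynomial

/-- The key polynomials of `y² = f`: `P 0 = 1`, `P 1 = f'/2`, and
`P (m+1) = (P m)'·f + (1/2 - m)·(P m)·f'`. -/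
noncomputable def keyP (f : Polynomial ℝ) : ℕ → Polynomial ℝ
  | 0 => 1
  | 1 => C (1 / 2 : ℝ) * derivative f
  | m + 2 =>
      derivative (keyP f (m + 1)) * f
        + C (1 / 2 - (m + 1 : ℝ)) * (keyP f (m + 1) * derivative f)

set_option maxHeartbeats 4000000 in
/-- In `ℝ[x, f⁻¹, y]/(y² - f)`, with `Y m = f⁻ᵐ·y·(P m)` playing the role of `y⁽ᵐ⁾`, using
`(xy)⁽ᵐ⁾ = m·y⁽ᵐ⁻¹⁾ + x·y⁽ᵐ⁾` and `(x²y)⁽ᵐ⁾ = m(m-1)·y⁽ᵐ⁻²⁾ + 2mx·y⁽ᵐ⁻¹⁾ + x²·y⁽ᵐ⁾`,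
the 3×3 Wronskian of `y, xy, x²y` at orders `n, n+1, n+2` equals `(f⁻ⁿy)³·P_{3,n}`, where
`PX_{3,n} = (n+1)²(n+2)·Pₙ³ - n(n+1)·Pₙ·(2(n+2)·Pₙ₋₁Pₙ₊₁ + (n-1)·Pₙ₋₂Pₙ₊₂)
  + n·((n²+n-2)·Pₙ₋₂Pₙ₊₁² + n(n+1)·Pₙ₋₁²Pₙ₊₂)` for all `n ≥ 2`. -/
theorem generalized_keyPolynomial_three {R : Type*} [CommRing R] [Algebra ℝ R]
    (f : Polynomial ℝ) (x y w : R)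
    (hw : w * aeval x f = 1) (hy : y ^ 2 = aeval x f)
    (Y : ℕ → R) (hY : ∀ m : ℕ, Y m = w ^ m * y * aeval x (keyP f m)) :
    ∀ n : ℕ, 2 ≤ n →
      Matrix.det !![Y n, Y (n + 1), Y (n + 2);
          (n : R) * Y (n - 1) + x * Y n,
            ((n : R) + 1) * Y n + x * Y (n + 1),
            ((n : R) + 2) * Y (n + 1) + x * Y (n + 2);
          (n : R) * ((n : R) - 1) * Y (n - 2) + 2 * (n : R) * x * Y (n - 1) + x ^ 2 * Y n,
            ((n : R) + 1) * (n : R) * Y (n - 1) + 2 * ((n : R) + 1) * x * Y n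
              + x ^ 2 * Y (n + 1),
            ((n : R) + 2) * ((n : R) + 1) * Y n + 2 * ((n : R) + 2) * x * Y (n + 1)
              + x ^ 2 * Y (n + 2)]
        = w ^ (3 * n) * y ^ 3
            * aeval x (C (((n : ℝ) + 1) ^ 2 * ((n : ℝ) + 2)) * keyP f n ^ 3
                - C ((n : ℝ) * ((n : ℝ) + 1)) * keyP f n
                    * (C (2 * ((n : ℝ) + 2)) * (keyP f (n - 1) * keyP f (n + 1))
                      + C ((n : ℝ) - 1) * (keyP f (n - 2) * keyP f (n + 2)))
                + C (n : ℝ)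
                    * (C ((n : ℝ) ^ 2 + (n : ℝ) - 2) * (keyP f (n - 2) * keyP f (n + 1) ^ 2)
                      + C ((n : ℝ) * ((n : ℝ) + 1)) * (keyP f (n - 1) ^ 2 * keyP f (n + 2)))) := by
  intro n hn
  obtain ⟨m, rfl⟩ := Nat.exists_eq_add_of_le hn
  have h1 : 2 + m - 1 = m + 1 := by omega
  have h2 : 2 + m - 2 = m := by omega
  rw [h1, h2]
  simp only [Matrix.det_fin_three, Matrix.cons_val', Matrix.cons_val_zero, Matrix.cons_val_one,
    Matrix.head_cons, Matrix.empty_val', Matrix.cons_val_fin_one, Matrix.head_fin_const,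
    Matrix.cons_val_two, Matrix.tail_cons, Matrix.of_apply]
  simp only [show 2 + m = m + 2 from by omega]
  simp only [show m + 2 + 1 = m + 3 from by omega, show m + 2 + 2 = m + 4 from by omega,
    show 3 * (m + 2) = m + (m + (m + 6)) from by omega]
  simp only [hY, pow_add, Nat.cast_add, Nat.cast_ofNat, map_add, map_sub, map_mul, map_pow,
    aeval_C, map_one, map_natCast, map_ofNat]
  push_cast
  ring
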